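/- arXiv:0809.0965 — 3 statements merged into one kernel-verified Lean document; each statement's English description precedes it below -/
import Mathlib

section
/- Let f : [α,β] → ℝ be continuous on [α,β] with right derivative equal to 0 at every point of (α,β). Then f is constant on [α,β]. -/
open Set

/-- `f` is constant on every `[c, b]` with `a < c`, and continuity carries the value over to `a`. -/
theorem constant_of_hasDerivWithinAt_Ici_zero_of_Ioo {E : Type*} [NormedAddCommGroup E]
    [NormedSpace ℝ E] {f : ℝ → E} {a b : ℝ} (hcont : ContinuousOn f (Icc a b))
    (hderiv : ∀ x ∈ Ioo a b, HasDerivWithinAt f 0 (Ici x) x) : ∀ x ∈ Icc a b, f x = f a := by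
  rcases lt_or_ge a b with hab | hba
  · have hright : EqOn f (fun _ ↦ f b) (Ioc a b) := fun c hc ↦
      (constant_of_has_deriv_right_zero (hcont.mono (Icc_subset_Icc hc.1.le le_rfl))
        (fun x hx ↦ hderiv x ⟨hc.1.trans_le hx.1, hx.2⟩) b ⟨hc.2, le_rfl⟩).symm
    have hIcc : EqOn f (fun _ ↦ f b) (Icc a b) :=
      hright.of_subset_closure hcont continuousOn_const Ioc_subset_Icc_self
        (closure_Ioc hab.ne).ge
    intro x hx
    rw [hIcc hx, hIcc (left_mem_Icc.2 hab.le)]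
  · intro x hx
    rw [le_antisymm (hx.2.trans hba) hx.1]

theorem stmt_4_general (α β : ℝ) (f : ℝ → ℝ)
    (hf : ContinuousOn f (Set.Icc α β))
    (hf' : ∀ x ∈ Set.Ioo α β, HasDerivWithinAt f 0 (Set.Ici x) x) :
    ∀ x ∈ Set.Icc α β, f x = f α :=
  constant_of_hasDerivWithinAt_Ici_zero_of_Ioo hf hf'

theorem stmt_4 (α β : ℝ) (hab : α < β) (f : ℝ → ℝ)
    (hf : ContinuousOn f (Set.Icc α β))
    (hf' : ∀ x ∈ Set.Ioo α β, HasDerivWithinAt f 0 (Set.Ici x) x) :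
    ∀ x ∈ Set.Icc α β, f x = f α :=
  stmt_4_general α β f hf hf'
end

section
/- Let I be an open interval, a ∈ I, f : I → ℝ continuous at a, and suppose there exists l ∈ ℝ such that the slope P(x,y) = (f(y)-f(x))/(y-x) tends to l as x → a⁻ and y → a⁺ (x < a < y). Then f is differentiable at a with f'(a) = l. -/
/-!
For fixed `x < a`, continuity of `f` at `a` makes the slope over `[x, y]` converge to the slope
over `[x, a]` as `y → a⁺`; since the slopes over `[x, y]` are eventually close to `l`, so is the
slope over `[x, a]`. This gives the left derivative, and the right one follows symmetrically.
-/

open Filter Topology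

namespace Filter.Tendsto

variable {α β γ : Type*} [TopologicalSpace γ] [RegularSpace γ] {la : Filter α} {lb : Filter β}
  {g : α × β → γ} {h : α → γ} {l : γ}

theorem of_prod_of_eventually_tendsto_right [lb.NeBot] (hg : Tendsto g (la ×ˢ lb) (𝓝 l))
    (hh : ∀ᶠ x in la, Tendsto (fun y => g (x, y)) lb (𝓝 (h x))) : Tendsto h la (𝓝 l) := by
  rw [(closed_nhds_basis l).tendsto_right_iff]
  rintro s ⟨hs, hs_closed⟩
  filter_upwards [(hg.eventually_mem hs).curry, hh] with x hx_mem hx_lim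
  exact hs_closed.mem_of_tendsto hx_lim hx_mem

theorem of_prod_of_eventually_tendsto_left {h : β → γ} [la.NeBot]
    (hg : Tendsto g (la ×ˢ lb) (𝓝 l))
    (hh : ∀ᶠ y in lb, Tendsto (fun x => g (x, y)) la (𝓝 (h y))) : Tendsto h lb (𝓝 l) :=
  of_prod_of_eventually_tendsto_right (g := g ∘ Prod.swap) (hg.comp tendsto_prod_swap) hh

end Filter.Tendsto

theorem ContinuousAt.slope {𝕜 : Type*} [NormedField 𝕜] {f : 𝕜 → 𝕜} {a x : 𝕜}
    (hf : ContinuousAt f a) (hx : x ≠ a) : ContinuousAt (slope f x) a := by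
  rw [slope_fun_def_field]
  exact (hf.sub continuousAt_const).div (continuousAt_id.sub continuousAt_const)
    (sub_ne_zero.2 hx.symm)

theorem stmt_11_general
    (a : ℝ) (f : ℝ → ℝ) (hcont : ContinuousAt f a) (l : ℝ)
    (hlim : Filter.Tendsto (fun p : ℝ × ℝ => (f p.2 - f p.1) / (p.2 - p.1))
      ((nhdsWithin a (Set.Iio a)) ×ˢ (nhdsWithin a (Set.Ioi a))) (nhds l)) :
    HasDerivAt f l a := by
  simp only [← slope_def_field] at hlim
  rw [hasDerivAt_iff_tendsto_slope, ← nhdsLT_sup_nhdsGT, tendsto_sup]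
  constructor
  · have hleft : ∀ᶠ x in 𝓝[<] a, Tendsto (slope f x) (𝓝[>] a) (𝓝 (slope f x a)) := by
      filter_upwards [self_mem_nhdsWithin] with x hx
      exact (hcont.slope hx.ne).tendsto.mono_left nhdsWithin_le_nhds
    rw [funext (slope_comm f a)]
    exact hlim.of_prod_of_eventually_tendsto_right hleft
  · have hright : ∀ᶠ y in 𝓝[>] a, Tendsto (fun x => slope f x y) (𝓝[<] a) (𝓝 (slope f a y)) := by
      filter_upwards [self_mem_nhdsWithin] with y hy
      simp only [slope_comm f _ y]
      exact (hcont.slope hy.ne').tendsto.mono_left nhdsWithin_le_nhds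
    exact hlim.of_prod_of_eventually_tendsto_left hright

theorem stmt_11 (I : Set ℝ) (hI : IsOpen I) (hconn : I.OrdConnected)
    (a : ℝ) (ha : a ∈ I) (f : ℝ → ℝ) (hcont : ContinuousAt f a) (l : ℝ)
    (hlim : Filter.Tendsto (fun p : ℝ × ℝ => (f p.2 - f p.1) / (p.2 - p.1))
      ((nhdsWithin a (Set.Iio a)) ×ˢ (nhdsWithin a (Set.Ioi a))) (nhds l)) :
    HasDerivAt f l a :=
  stmt_11_general a f hcont l hlim
end

section
/- Let I be an open interval and f : I → ℝ. If f is strictly differentiable at every point of I (i.e., for each a ∈ I the slope (f(y)-f(x))/(y-x) has a limit as (x,y) → (a,a) with x ≠ y), then f is continuously differentiable (C¹) on I. -/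
/-!
Strict differentiability of `f` at `a` with derivative `l` says exactly that the slope of `f`
between `x` and `y` tends to `l` as `(x, y) → (a, a)` off the diagonal. For `b` close to `a`,
`f' b` is a limit of slopes between points close to `a`, hence lies in any closed neighbourhood
of `f' a` that eventually contains those slopes; so `f'` is continuous wherever `f` is strictly
differentiable, and `f` is `C¹`.
-/

open Filter Set Topology

section Slope

variable {𝕜 : Type*} [NontriviallyNormedField 𝕜] {F : Type*} [NormedAddCommGroup F]
  [NormedSpace 𝕜 F] {f : 𝕜 → F} {f' : F}

/-- The slope vanishes on the diagonal (`0⁻¹ = 0`), so the limit is taken off it. -/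
theorem hasDerivAtFilter_iff_tendsto_slope_offDiag {L : Filter (𝕜 × 𝕜)} :
    HasDerivAtFilter f f' L ↔
      Tendsto (fun p : 𝕜 × 𝕜 ↦ slope f p.1 p.2) (L ⊓ 𝓟 {p | p.1 ≠ p.2}) (𝓝 f') :=
  calc HasDerivAtFilter f f' L
    _ ↔ Tendsto (fun p : 𝕜 × 𝕜 ↦ slope f p.2 p.1 - (p.1 - p.2)⁻¹ • (p.1 - p.2) • f') L
        (𝓝 0) := by
      simp only [hasDerivAtFilter_iff_tendsto, ← norm_inv, ← norm_smul,
        ← tendsto_zero_iff_norm_tendsto_zero, slope_def_module, smul_sub]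
    _ ↔ Tendsto (fun p : 𝕜 × 𝕜 ↦ slope f p.1 p.2 - (p.1 - p.2)⁻¹ • (p.1 - p.2) • f') L
        (𝓝 0) := by
      simp only [slope_comm f (Prod.snd _)]
    _ ↔ Tendsto (fun p : 𝕜 × 𝕜 ↦ slope f p.1 p.2 - (p.1 - p.2)⁻¹ • (p.1 - p.2) • f')
        (L ⊓ 𝓟 {p | p.1 ≠ p.2}) (𝓝 0) :=
      .symm <| tendsto_inf_principal_nhds_iff_of_forall_eq <| by
        simp +contextual [slope_same]
    _ ↔ Tendsto (fun p : 𝕜 × 𝕜 ↦ slope f p.1 p.2 - f') (L ⊓ 𝓟 {p | p.1 ≠ p.2}) (𝓝 0) :=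
      tendsto_congr' <| by
        refine (EqOn.eventuallyEq fun p hp ↦ ?_).filter_mono inf_le_right
        rw [inv_smul_smul₀ (sub_ne_zero.2 hp) f']
    _ ↔ Tendsto (fun p : 𝕜 × 𝕜 ↦ slope f p.1 p.2) (L ⊓ 𝓟 {p | p.1 ≠ p.2}) (𝓝 f') := by
      rw [← nhds_translation_sub f', tendsto_comap_iff]; rfl

theorem hasStrictDerivAt_iff_tendsto_slope {a : 𝕜} :
    HasStrictDerivAt f f' a ↔
      Tendsto (fun p : 𝕜 × 𝕜 ↦ slope f p.1 p.2) (𝓝[{p | p.1 ≠ p.2}] (a, a)) (𝓝 f') :=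
  hasDerivAtFilter_iff_tendsto_slope_offDiag

theorem HasStrictDerivAt.continuousWithinAt_of_hasDerivAt {g : 𝕜 → F} {s : Set 𝕜} {a : 𝕜}
    (ha : HasStrictDerivAt f (g a) a) (hs : ∀ b ∈ s, HasDerivAt f (g b) b) :
    ContinuousWithinAt g s a := by
  refine (closed_nhds_basis (g a)).tendsto_right_iff.2 fun V ⟨hV, hV_closed⟩ ↦ ?_
  have hslope : ∀ᶠ b in 𝓝 a, ∀ᶠ p in 𝓝 (b, b), p.1 ≠ p.2 → slope f p.1 p.2 ∈ V := by
    have hnear := eventually_nhdsWithin_iff.1 (hasStrictDerivAt_iff_tendsto_slope.1 ha hV)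
    have := hnear.eventually_nhds
    rw [nhds_prod_eq] at this
    exact this.diag_of_prod
  filter_upwards [nhdsWithin_le_nhds hslope, self_mem_nhdsWithin] with b hb hbs
  refine hV_closed.mem_of_tendsto (hs b hbs).tendsto_slope ?_
  filter_upwards [nhdsWithin_le_nhds ((Continuous.prodMk_right b).tendsto b |>.eventually hb),
    self_mem_nhdsWithin] with y hy hyb
  exact hy (Ne.symm hyb)

theorem contDiffOn_one_of_hasDerivWithinAt {g : 𝕜 → F} {s : Set 𝕜}
    (hf : ∀ x ∈ s, HasDerivWithinAt f (g x) s x) (hg : ContinuousOn g s) :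
    ContDiffOn 𝕜 1 f s := by
  intro x hx
  rw [← zero_add 1, contDiffWithinAt_succ_iff_hasFDerivWithinAt (by simp), insert_eq_of_mem hx]
  refine ⟨s, self_mem_nhdsWithin, by simp, fun y ↦ ContinuousLinearMap.toSpanSingleton 𝕜 (g y),
    fun y hy ↦ (hf y hy).hasFDerivWithinAt, ?_⟩
  exact contDiffOn_zero.2
    (ContinuousLinearMap.toSpanSingletonCLE.continuous.comp_continuousOn hg) x hx

end Slope

theorem stmt_12_general (I : Set ℝ)
    (f : ℝ → ℝ)
    (hstrict : ∀ a ∈ I, ∃ l : ℝ,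
      Filter.Tendsto (fun p : ℝ × ℝ => (f p.2 - f p.1) / (p.2 - p.1))
        (nhdsWithin (a, a) {p : ℝ × ℝ | p.1 ≠ p.2}) (nhds l)) :
    ContDiffOn ℝ 1 f I := by
  choose! f' hf' using hstrict
  have hstrict' : ∀ a ∈ I, HasStrictDerivAt f (f' a) a := fun a ha ↦
    hasStrictDerivAt_iff_tendsto_slope.2 <| by simpa only [slope_def_field] using hf' a ha
  exact contDiffOn_one_of_hasDerivWithinAt
    (fun a ha ↦ (hstrict' a ha).hasDerivAt.hasDerivWithinAt)
    fun a ha ↦ (hstrict' a ha).continuousWithinAt_of_hasDerivAt fun b hb ↦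
      (hstrict' b hb).hasDerivAt

theorem stmt_12 (I : Set ℝ) (hI : IsOpen I) (hconn : I.OrdConnected)
    (f : ℝ → ℝ)
    (hstrict : ∀ a ∈ I, ∃ l : ℝ,
      Filter.Tendsto (fun p : ℝ × ℝ => (f p.2 - f p.1) / (p.2 - p.1))
        (nhdsWithin (a, a) {p : ℝ × ℝ | p.1 ≠ p.2}) (nhds l)) :
    ContDiffOn ℝ 1 f I :=
  stmt_12_general I f hstrict
end
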